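/- Let f : ℝ → ℝ be the sinc function, f(t) = sin(πt)/(πt) for t ≠ 0 and f(0) = 1, and for n ∈ ℤ^d define φ̂_n : ℝ^d → ℝ by φ̂_n(x) = ∏_{j=1}^d f(n_j + x_j). Then for every multiindex α ∈ ℕ^d and every x ∈ ℝ^d, the family (∂^α φ̂_n(x))_{n ∈ ℤ^d} is square-summable, and the tails tend to zero: ∑_{n ∈ ℤ^d, |n|_∞ > N} (∂^α φ̂_n(x))² → 0 as N → ∞. -/

import Mathlib

/-!
Because `∂^α φ̂_n(x) = ∏_j sinc^{(α_j)}(n_j + x_j)`, the squares form a product of one-dimensional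
families, so it suffices that `k ↦ sinc^{(m)}(k + c)²` is summable over `ℤ`. Differentiating
`sinc t = ∫₀¹ cos (π t s) ds` under the integral sign gives `|sinc^{(m)}| ≤ π^m`, and
differentiating `t · sinc t = sin (π t) / π` by Leibniz's rule gives
`t · sinc^{(m)}(t) = π^{m-1} sin (π t + m π/2) - m · sinc^{(m-1)}(t)`,
so `sinc^{(m)}(t) = O(1/|t|)`.
The tails over the complements of the boxes `[-N, N]^d` then tend to zero because the boxes
exhaust `ℤ^d`.
-/

open scoped BigOperators

/-- The sinc function: `f(t) = sin(πt)/(πt)` for `t ≠ 0` and `f(0) = 1`. -/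
noncomputable def sinc (t : ℝ) : ℝ :=
  if t = 0 then 1 else Real.sin (Real.pi * t) / (Real.pi * t)

/-- `φ̂_n(x) = ∏_{j=1}^d f(n_j + x_j)` where `f` is the sinc function. -/
noncomputable def phihat {d : ℕ} (n : Fin d → ℤ) (x : Fin d → ℝ) : ℝ :=
  ∏ j, sinc ((n j : ℝ) + x j)

/-- Partial derivative in the `j`-th coordinate direction. -/
noncomputable def coordDeriv {d : ℕ} {E : Type*} [NormedAddCommGroup E] [NormedSpace ℝ E]
    (j : Fin d) (g : (Fin d → ℝ) → E) : (Fin d → ℝ) → E :=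
  fun x => fderiv ℝ g x (Pi.single j 1)

/-- The multiindex partial derivative `∂^α = ∂^{α_1}_{x_1} ⋯ ∂^{α_d}_{x_d}`. -/
noncomputable def multiDeriv {d : ℕ} {E : Type*} [NormedAddCommGroup E] [NormedSpace ℝ E]
    (α : Fin d → ℕ) (g : (Fin d → ℝ) → E) : (Fin d → ℝ) → E :=
  (List.finRange d).foldr (fun j h => (coordDeriv j)^[α j] h) g

open Real hiding sinc
open Filter Topology

noncomputable def sincDeriv (m : ℕ) (t : ℝ) : ℝ :=
  ∫ s in (0 : ℝ)..1, (π * s) ^ m * cos (π * t * s + m * (π / 2))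

lemma sinc_eq_sincDeriv_zero : sinc = sincDeriv 0 := by
  funext t
  simp only [sincDeriv, pow_zero, one_mul, Nat.cast_zero, zero_mul, add_zero]
  by_cases ht : t = 0
  · simp [sinc, ht]
  · have hπt : π * t ≠ 0 := mul_ne_zero pi_ne_zero ht
    rw [intervalIntegral.integral_comp_mul_left (fun s => cos s) hπt, integral_cos]
    simp only [sinc, ht, if_false, mul_zero, sin_zero, sub_zero, smul_eq_mul]
    field_simp

lemma norm_pi_mul_pow_mul_cos_le {s : ℝ} (hs : s ∈ Set.uIoc 0 1) (m : ℕ) (θ : ℝ) :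
    ‖(π * s) ^ m * cos θ‖ ≤ π ^ m := by
  rw [Set.uIoc_of_le zero_le_one] at hs
  have hπs : 0 ≤ π * s := mul_nonneg pi_pos.le hs.1.le
  rw [norm_mul, norm_pow, Real.norm_eq_abs, Real.norm_eq_abs, abs_of_nonneg hπs]
  calc (π * s) ^ m * |cos θ| ≤ π ^ m * 1 := by
        gcongr
        · exact mul_le_of_le_one_right pi_pos.le hs.2
        · exact abs_cos_le_one θ
    _ = π ^ m := mul_one _

lemma hasDerivAt_sincDeriv (m : ℕ) (t : ℝ) :
    HasDerivAt (sincDeriv m) (sincDeriv (m + 1) t) t := by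
  have hderiv : ∀ s u : ℝ, HasDerivAt (fun u => (π * s) ^ m * cos (π * u * s + m * (π / 2)))
      ((π * s) ^ (m + 1) * cos (π * u * s + (m + 1 : ℕ) * (π / 2))) u := by
    intro s u
    have := (((hasDerivAt_id u).const_mul π).mul_const s |>.add_const (m * (π / 2))).cos
      |>.const_mul ((π * s) ^ m)
    refine this.congr_deriv ?_
    rw [Nat.cast_succ, add_one_mul, ← add_assoc, cos_add_pi_div_two, id]
    ring
  exact (intervalIntegral.hasDerivAt_integral_of_dominated_loc_of_deriv_le
    (bound := fun _ => π ^ (m + 1)) univ_mem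
    (.of_forall fun u => (by fun_prop : Continuous _).aestronglyMeasurable)
    ((by fun_prop : Continuous _).intervalIntegrable _ _)
    ((by fun_prop : Continuous _).aestronglyMeasurable)
    (.of_forall fun s hs u _ => norm_pi_mul_pow_mul_cos_le hs _ _) intervalIntegrable_const
    (.of_forall fun s _ u _ => hderiv s u)).2

lemma abs_sincDeriv_le (m : ℕ) (t : ℝ) : |sincDeriv m t| ≤ π ^ m := by
  simpa [sincDeriv] using intervalIntegral.norm_integral_le_of_norm_le_const
    fun s hs => norm_pi_mul_pow_mul_cos_le hs m (π * t * s + m * (π / 2))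

lemma iteratedDeriv_sinc (m : ℕ) : iteratedDeriv m sinc = sincDeriv m := by
  induction m with
  | zero => rw [iteratedDeriv_zero, sinc_eq_sincDeriv_zero]
  | succ k ih =>
    rw [iteratedDeriv_succ, ih]
    exact funext fun t => (hasDerivAt_sincDeriv k t).deriv

lemma differentiable_iteratedDeriv_sinc (m : ℕ) : Differentiable ℝ (iteratedDeriv m sinc) := by
  rw [iteratedDeriv_sinc]
  exact fun t => (hasDerivAt_sincDeriv m t).differentiableAt

lemma iteratedDeriv_succ_id_mul {𝕜 : Type*} [NontriviallyNormedField 𝕜] {f : 𝕜 → 𝕜}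
    (hf : ∀ k, Differentiable 𝕜 (iteratedDeriv k f)) (m : ℕ) :
    iteratedDeriv (m + 1) (fun t => t * f t)
      = fun t => t * iteratedDeriv (m + 1) f t + (m + 1) * iteratedDeriv m f t := by
  have hD : ∀ k t, HasDerivAt (iteratedDeriv k f) (iteratedDeriv (k + 1) f t) t := fun k t => by
    rw [iteratedDeriv_succ]; exact (hf k t).hasDerivAt
  induction m with
  | zero =>
    funext t
    have hf0 : HasDerivAt f (iteratedDeriv 1 f t) t := by simpa using hD 0 t
    rw [iteratedDeriv_one, ((hasDerivAt_id' t).fun_mul hf0).deriv, iteratedDeriv_zero]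
    push_cast
    ring
  | succ k ih =>
    funext t
    rw [iteratedDeriv_succ, ih,
      (((hasDerivAt_id' t).fun_mul (hD (k + 1) t)).fun_add ((hD k t).const_mul _)).deriv]
    push_cast
    ring

lemma iteratedDeriv_sin_pi_mul (m : ℕ) :
    iteratedDeriv m (fun t => sin (π * t)) = fun t => π ^ m * sin (π * t + m * (π / 2)) := by
  induction m with
  | zero => simp
  | succ k ih =>
    funext t
    rw [iteratedDeriv_succ, ih]
    refine (((((hasDerivAt_id t).const_mul π).add_const _).sin).const_mul _).deriv.trans ?_
    rw [Nat.cast_succ, add_one_mul, ← add_assoc, sin_add_pi_div_two, id]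
    ring

lemma mul_sinc_eq (t : ℝ) : t * sinc t = π⁻¹ * sin (π * t) := by
  by_cases ht : t = 0
  · simp [ht]
  · simp only [sinc, ht, if_false]
    field_simp

lemma abs_mul_iteratedDeriv_sinc_le (m : ℕ) (t : ℝ) :
    |t * iteratedDeriv m sinc t| ≤ (m + 1) * π ^ m := by
  have hπ : 1 ≤ π := by linarith [pi_gt_three]
  rcases m with _ | k
  · rw [iteratedDeriv_zero, mul_sinc_eq, abs_mul, abs_inv, abs_of_pos pi_pos]
    calc π⁻¹ * |sin (π * t)| ≤ 1 * 1 := by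
          gcongr
          · exact inv_le_one_of_one_le₀ hπ
          · exact abs_sin_le_one _
      _ = _ := by simp
  · have hLeibniz := congrFun (iteratedDeriv_succ_id_mul differentiable_iteratedDeriv_sinc k) t
    simp only [mul_sinc_eq, iteratedDeriv_const_mul_field, iteratedDeriv_sin_pi_mul] at hLeibniz
    rw [eq_sub_of_add_eq hLeibniz.symm]
    calc |π⁻¹ * (π ^ (k + 1) * sin _) - (k + 1) * iteratedDeriv k sinc t|
        ≤ π⁻¹ * (π ^ (k + 1) * 1) + (k + 1) * π ^ k := by
          refine (abs_sub _ _).trans (add_le_add ?_ ?_)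
          · rw [abs_mul, abs_mul, abs_of_pos (inv_pos.2 pi_pos), abs_of_pos (by positivity)]
            gcongr
            exact abs_sin_le_one _
          · rw [abs_mul, abs_of_pos (by positivity)]
            gcongr
            rw [iteratedDeriv_sinc]
            exact abs_sincDeriv_le k t
      _ = ((k + 1 : ℕ) + 1) * π ^ k := by push_cast; field_simp; ring
      _ ≤ ((k + 1 : ℕ) + 1) * π ^ (k + 1) := by gcongr; exact k.le_succ

lemma summable_sq_iteratedDeriv_sinc_int_add (m : ℕ) (c : ℝ) :
    Summable fun k : ℤ => iteratedDeriv m sinc (k + c) ^ 2 := by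
  have hdom : Summable fun k : ℤ => ((m + 1) * π ^ m) ^ 2 * (1 / |(k : ℝ) + c| ^ (2 : ℝ)) :=
    ((summable_one_div_int_add_rpow c 2).2 one_lt_two).mul_left _
  -- `1 / |k + c| ^ 2` is `0` at the (at most one) `k` with `k + c = 0`.
  have hzero : {k : ℤ | (k : ℝ) + c = 0}.Finite :=
    Set.Subsingleton.finite fun a ha b hb => Int.cast_injective (α := ℝ) <| by
      simp only [Set.mem_ofPred_eq] at ha hb
      linarith
  refine hdom.of_norm_bounded_eventually ?_
  filter_upwards [hzero.compl_mem_cofinite] with k hk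
  rw [rpow_two, Real.norm_eq_abs, abs_pow, mul_one_div, le_div_iff₀ (pow_pos (abs_pos.2 hk) 2),
    ← mul_pow, ← abs_mul, mul_comm]
  exact pow_le_pow_left₀ (abs_nonneg _) (abs_mul_iteratedDeriv_sinc_le m _) 2

lemma coordDeriv_prod {d : ℕ} {g : Fin d → ℝ → ℝ} (hg : ∀ j, Differentiable ℝ (g j)) (i : Fin d) :
    coordDeriv i (fun x => ∏ j, g j (x j))
      = fun x => ∏ j, Function.update g i (deriv (g i)) j (x j) := by
  funext x
  have hfactor : ∀ j, HasFDerivAt (fun x : Fin d → ℝ => g j (x j))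
      (deriv (g j) (x j) • ContinuousLinearMap.proj j) x := fun j =>
    (hg j (x j)).hasDerivAt.comp_hasFDerivAt x
      (ContinuousLinearMap.proj (R := ℝ) (φ := fun _ : Fin d => ℝ) j).hasFDerivAt
  rw [coordDeriv, (HasFDerivAt.finsetProd fun j _ => hfactor j).fderiv]
  simp only [sum_apply, smul_apply, ContinuousLinearMap.proj_apply, Pi.single_apply, smul_eq_mul,
    mul_ite, mul_one, mul_zero, Finset.sum_ite_eq', Finset.mem_univ, if_true]
  rw [← Finset.prod_erase_mul _ _ (Finset.mem_univ i), Function.update_self]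
  congr 1
  exact Finset.prod_congr rfl fun j hj => by rw [Function.update_of_ne (Finset.ne_of_mem_erase hj)]

lemma coordDeriv_iterate_prod_iteratedDeriv {d : ℕ} {g : Fin d → ℝ → ℝ}
    (hg : ∀ j k, Differentiable ℝ (iteratedDeriv k (g j))) (i : Fin d) (m : ℕ) (β : Fin d → ℕ) :
    (coordDeriv i)^[m] (fun x => ∏ j, iteratedDeriv (β j) (g j) (x j))
      = fun x => ∏ j, iteratedDeriv ((β + Pi.single i m : Fin d → ℕ) j) (g j) (x j) := by
  induction m with
  | zero => simp
  | succ m ih =>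
    rw [Function.iterate_succ_apply', ih, coordDeriv_prod fun j => hg j _]
    funext x
    refine Finset.prod_congr rfl fun j _ => ?_
    rcases eq_or_ne j i with rfl | hji
    · simp [← add_assoc, iteratedDeriv_succ]
    · simp [Function.update_of_ne hji, Pi.single_eq_of_ne hji]

lemma foldr_coordDeriv_iterate_prod_iteratedDeriv {d : ℕ} {g : Fin d → ℝ → ℝ}
    (hg : ∀ j k, Differentiable ℝ (iteratedDeriv k (g j))) (α : Fin d → ℕ) (L : List (Fin d))
    (β : Fin d → ℕ) :
    L.foldr (fun j h => (coordDeriv j)^[α j] h) (fun x => ∏ j, iteratedDeriv (β j) (g j) (x j))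
      = fun x => ∏ j, iteratedDeriv
          ((β + (L.map fun j => (Pi.single j (α j) : Fin d → ℕ)).sum) j) (g j) (x j) := by
  induction L with
  | nil => simp
  | cons i L ih =>
    rw [List.foldr_cons, ih, coordDeriv_iterate_prod_iteratedDeriv hg, List.map_cons, List.sum_cons,
      add_assoc, add_comm _ (Pi.single i (α i) : Fin d → ℕ)]

lemma multiDeriv_prod {d : ℕ} {g : Fin d → ℝ → ℝ}
    (hg : ∀ j k, Differentiable ℝ (iteratedDeriv k (g j))) (α : Fin d → ℕ) :
    multiDeriv α (fun x => ∏ j, g j (x j)) = fun x => ∏ j, iteratedDeriv (α j) (g j) (x j) := by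
  have h := foldr_coordDeriv_iterate_prod_iteratedDeriv hg α (List.finRange d) 0
  simp only [zero_add, ← Fin.sum_univ_def, Finset.univ_sum_single] at h
  exact h

lemma summable_fin_prod_of_nonneg {ι : Type*} : ∀ {d : ℕ} {f : Fin d → ι → ℝ},
    (∀ j, 0 ≤ f j) → (∀ j, Summable (f j)) → Summable fun n : Fin d → ι => ∏ j, f j (n j)
  | 0, _, _, _ => .of_finite
  | d + 1, f, hf0, hf => by
    rw [← (Fin.consEquiv fun _ => ι).summable_iff]
    simpa [Function.comp_def, Fin.consEquiv, Fin.prod_univ_succ] using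
      (hf 0).mul_of_nonneg (summable_fin_prod_of_nonneg (fun j => hf0 j.succ) fun j => hf j.succ)
        (hf0 0) fun n => Finset.prod_nonneg fun j _ => hf0 j.succ (n j)

lemma tendsto_tsum_sup_natAbs_gt_atTop_zero {G : Type*} [AddCommGroup G] [UniformSpace G]
    [IsUniformAddGroup G] [CompleteSpace G] {d : ℕ} (f : (Fin d → ℤ) → G) :
    Tendsto (fun N : ℕ => ∑' n : {n : Fin d → ℤ // N < Finset.univ.sup fun j => (n j).natAbs}, f n)
      atTop (𝓝 0) := by
  let box (N : ℕ) : Finset (Fin d → ℤ) := Fintype.piFinset fun _ => Finset.Icc (-N : ℤ) N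
  have mem_box : ∀ N n, n ∈ box N ↔ (Finset.univ.sup fun j => (n j).natAbs) ≤ N := by
    intro N n
    simp only [box, Fintype.mem_piFinset, Finset.mem_Icc, Finset.sup_le_iff, Finset.mem_univ,
      true_implies]
    exact forall_congr' fun j => by omega
  have hbox : Tendsto box atTop atTop :=
    tendsto_atTop_finset_of_monotone
      (fun N M hNM => Fintype.piFinset_subset _ _ fun _ =>
        Finset.Icc_subset_Icc (by omega) (by omega))
      fun n => ⟨_, (mem_box _ n).2 le_rfl⟩
  refine ((tendsto_tsum_compl_atTop_zero f).comp hbox).congr fun N => ?_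
  exact Equiv.tsum_eq (Equiv.subtypeEquivRight fun n => (mem_box N n).not.trans not_le)
    fun n => f n.1

lemma multiDeriv_phihat {d : ℕ} (α : Fin d → ℕ) (n : Fin d → ℤ) :
    multiDeriv α (phihat n) = fun x => ∏ j, iteratedDeriv (α j) sinc (n j + x j) := by
  have hg : ∀ j k, Differentiable ℝ (iteratedDeriv k fun t => sinc (n j + t)) := fun j k => by
    rw [iteratedDeriv_comp_const_add]
    exact (differentiable_iteratedDeriv_sinc k).comp (differentiable_id.const_add _)
  have h := multiDeriv_prod hg α
  simp only [iteratedDeriv_comp_const_add] at h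
  exact h

/-- For every multiindex `α ∈ ℕ^d` and every `x ∈ ℝ^d`, the family
`(∂^α φ̂_n(x))_{n ∈ ℤ^d}` is square-summable, and the tails tend to zero:
`∑_{|n|_∞ > N} (∂^α φ̂_n(x))² → 0` as `N → ∞`. -/
theorem stmt3 (d : ℕ) (α : Fin d → ℕ) (x : Fin d → ℝ) :
    Summable (fun n : Fin d → ℤ => (multiDeriv α (phihat n) x) ^ 2) ∧
    Filter.Tendsto
      (fun N : ℕ =>
        ∑' n : {n : Fin d → ℤ // N < Finset.univ.sup fun j => (n j).natAbs},
          (multiDeriv α (phihat n.1) x) ^ 2)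
      Filter.atTop (nhds 0) := by
  refine ⟨?_, tendsto_tsum_sup_natAbs_gt_atTop_zero fun n => multiDeriv α (phihat n) x ^ 2⟩
  simp only [multiDeriv_phihat, ← Finset.prod_pow]
  exact summable_fin_prod_of_nonneg (f := fun j (k : ℤ) => iteratedDeriv (α j) sinc (k + x j) ^ 2)
    (fun j k => sq_nonneg _)
    fun j => summable_sq_iteratedDeriv_sinc_int_add (α j) (x j)
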